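/- arXiv:1006.3852 — 2 statements merged into one kernel-verified Lean document; each statement's English description precedes it below -/
import Mathlib

section
/- The group A = ⟨a, b | b³ = 1, a⁻¹ba = b⁻¹⟩ is generated by the two elements a³ and a²b. -/
/-- Generators of the group `A = ⟨a, b | b³ = 1, a⁻¹ba = b⁻¹⟩`. -/
inductive Gen : Type
  | a
  | b

/-- Relators: `b³` and `a⁻¹bab` (the latter encodes `a⁻¹ba = b⁻¹`). -/
def rels : Set (FreeGroup Gen) :=
  {FreeGroup.of Gen.b ^ 3,
   (FreeGroup.of Gen.a)⁻¹ * FreeGroup.of Gen.b * FreeGroup.of Gen.a * FreeGroup.of Gen.b}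

/-- The group `A = ⟨a, b | b³ = 1, a⁻¹ba = b⁻¹⟩`. -/
abbrev A := PresentedGroup rels

def a : A := PresentedGroup.of Gen.a
def b : A := PresentedGroup.of Gen.b

/-!
Since `a⁻¹ba = b⁻¹`, conjugation by `a` also inverts `b`, so
`(a⁻¹b)² = a⁻¹(ba⁻¹)b = a⁻¹a⁻¹b⁻¹b = a⁻²`. With `x = a³` and `y = a²b` we have `x⁻¹y = a⁻¹b`,
hence `a = x (x⁻¹y)²` and `b = a⁻²y`.
-/

section

variable {G : Type*} [Group G] {g h : G}

open Subgroup

theorem mul_mul_inv_eq_inv_of_inv_mul_mul_eq_inv (hgh : g⁻¹ * h * g = h⁻¹) :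
    g * h * g⁻¹ = h⁻¹ := by
  conv_lhs => rw [← inv_inv h, ← hgh]
  group

theorem inv_mul_sq_eq_inv_sq_of_inv_mul_mul_eq_inv (hgh : g⁻¹ * h * g = h⁻¹) :
    (g⁻¹ * h) ^ 2 = (g ^ 2)⁻¹ := by
  have hconj := mul_mul_inv_eq_inv_of_inv_mul_mul_eq_inv hgh
  calc (g⁻¹ * h) ^ 2 = g⁻¹ * g⁻¹ * (g * h * g⁻¹) * h := by rw [sq]; group
    _ = (g ^ 2)⁻¹ := by rw [hconj]; group

theorem Subgroup.closure_pow_three_pow_two_mul_eq_closure_pair (hgh : g⁻¹ * h * g = h⁻¹) :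
    closure {g ^ 3, g ^ 2 * h} = closure {g, h} := by
  set H := closure ({g ^ 3, g ^ 2 * h} : Set G)
  have hx : g ^ 3 ∈ H := subset_closure (.inl rfl)
  have hy : g ^ 2 * h ∈ H := subset_closure (.inr rfl)
  have hg : g ∈ H := by
    have hg_eq : g ^ 3 * ((g ^ 3)⁻¹ * (g ^ 2 * h)) ^ 2 = g := by
      calc g ^ 3 * ((g ^ 3)⁻¹ * (g ^ 2 * h)) ^ 2 = g ^ 3 * (g⁻¹ * h) ^ 2 := by group
        _ = g := by rw [inv_mul_sq_eq_inv_sq_of_inv_mul_mul_eq_inv hgh]; group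
    simpa only [hg_eq] using H.mul_mem hx (H.pow_mem (H.mul_mem (H.inv_mem hx) hy) 2)
  have hh : h ∈ H := by
    simpa using H.mul_mem (H.inv_mem (H.pow_mem hg 2)) hy
  have hg' : g ∈ closure {g, h} := subset_closure (.inl rfl)
  have hh' : h ∈ closure {g, h} := subset_closure (.inr rfl)
  apply le_antisymm <;> rw [closure_le, Set.insert_subset_iff, Set.singleton_subset_iff]
  exacts [⟨pow_mem hg' 3, mul_mem (pow_mem hg' 2) hh'⟩, ⟨hg, hh⟩]

end

theorem a_inv_mul_b_mul_a : a⁻¹ * b * a = b⁻¹ :=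
  eq_inv_of_mul_eq_one_left (PresentedGroup.one_of_mem (Set.mem_insert_of_mem _ rfl))

theorem closure_a_b_eq_top : Subgroup.closure {a, b} = ⊤ := by
  rw [← PresentedGroup.closure_range_of rels]
  congr 1
  ext x
  constructor
  · rintro (rfl | rfl)
    exacts [⟨Gen.a, rfl⟩, ⟨Gen.b, rfl⟩]
  · rintro ⟨_ | _, rfl⟩
    exacts [Or.inl rfl, Or.inr rfl]

/-- `A = ⟨a, b | b³ = 1, a⁻¹ba = b⁻¹⟩` is generated by the elements `a³` and `a²b`. -/
theorem A_generated_by_x_y :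
    Subgroup.closure ({a ^ 3, a ^ 2 * b} : Set A) = ⊤ := by
  rw [Subgroup.closure_pow_three_pow_two_mul_eq_closure_pair a_inv_mul_b_mul_a, closure_a_b_eq_top]
end

section
/- In the group A = ⟨a, b | b³ = 1, a⁻¹ba = b⁻¹⟩, the cyclic subgroup ⟨a³⟩ has index 9 in A. -/
open Subgroup MulAction

section NormalForm

variable {G : Type*} [Group G] {g h : G}

theorem zpowers_normal_of_conj_eq_inv (hconj : g * h * g⁻¹ = h⁻¹) (hgen : closure {g, h} = ⊤) :
    (zpowers h).Normal := by
  rw [← normalizer_eq_top_iff, eq_top_iff, ← hgen, closure_le, Set.insert_subset_iff,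
    Set.singleton_subset_iff]
  refine ⟨?_, le_normalizer (mem_zpowers h)⟩
  rw [SetLike.mem_coe, mem_normalizer_iff_map_conj_eq, MonoidHom.map_zpowers, MonoidHom.coe_coe,
    MulAut.conj_apply, hconj, zpowers_inv]

theorem exists_zpow_mul_zpow_eq [(zpowers h).Normal] (hgen : closure {g, h} = ⊤) (x : G) :
    ∃ i n : ℤ, h ^ i * g ^ n = x := by
  have hsup : zpowers h ⊔ zpowers g = ⊤ := by
    rw [eq_top_iff, ← hgen, closure_le, Set.insert_subset_iff, Set.singleton_subset_iff]
    exact ⟨mem_sup_right (mem_zpowers g), mem_sup_left (mem_zpowers h)⟩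
  have hx : x ∈ ((zpowers h ⊔ zpowers g : Subgroup G) : Set G) := by simp [hsup]
  rw [normal_mul, Set.mem_mul] at hx
  obtain ⟨_, ⟨i, rfl⟩, _, ⟨n, rfl⟩, hx⟩ := hx
  exact ⟨i, n, hx⟩

end NormalForm

theorem b_pow_three : b ^ 3 = 1 :=
  PresentedGroup.one_of_mem (Set.mem_insert _ _)

theorem a_mul_b_mul_a_inv : a * b * a⁻¹ = b⁻¹ := by
  have h : a⁻¹ * b * a * b = 1 := PresentedGroup.one_of_mem (Set.mem_insert_of_mem _ rfl)
  rw [mul_eq_one_iff_eq_inv] at h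
  simpa [mul_assoc] using congr(a * $h⁻¹ * a⁻¹).symm

theorem closure_a_b : closure {a, b} = ⊤ := by
  rw [← PresentedGroup.closure_range_of]
  congr
  ext x
  constructor
  · rintro (rfl | rfl)
    exacts [⟨.a, rfl⟩, ⟨.b, rfl⟩]
  · rintro ⟨_ | _, rfl⟩
    exacts [.inl rfl, .inr rfl]

instance : (zpowers b).Normal := zpowers_normal_of_conj_eq_inv a_mul_b_mul_a_inv closure_a_b

/-- `(i, n)` stands for the coset `b ^ i * a ^ n * ⟨a³⟩`; these are the actions of `a` and `b` on
those cosets, read off from `a * b ^ i = b ^ (-i) * a`. -/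
def permA : Equiv.Perm (ZMod 3 × ZMod 3) := (Equiv.neg _).prodCongr (Equiv.addRight 1)

def permB : Equiv.Perm (ZMod 3 × ZMod 3) := Equiv.addRight (1, 0)

def permOfGen : Gen → Equiv.Perm (ZMod 3 × ZMod 3)
  | .a => permA
  | .b => permB

theorem lift_permOfGen_eq_one : ∀ r ∈ rels, FreeGroup.lift permOfGen r = 1 := by
  rintro r (rfl | rfl) <;> simp only [map_mul, map_inv, map_pow, FreeGroup.lift_apply_of] <;> decide

noncomputable def cosetPerm : A →* Equiv.Perm (ZMod 3 × ZMod 3) :=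
  PresentedGroup.toGroup lift_permOfGen_eq_one

noncomputable instance : MulAction A (ZMod 3 × ZMod 3) := .compHom _ cosetPerm

theorem smul_eq_cosetPerm_apply (g : A) (p : ZMod 3 × ZMod 3) : g • p = cosetPerm g p := rfl

theorem a_zpow_smul_mk_zero (n : ℤ) (y : ZMod 3) :
    a ^ n • ((0, y) : ZMod 3 × ZMod 3) = (0, y + n) := by
  rw [smul_eq_cosetPerm_apply, map_zpow, cosetPerm, a, PresentedGroup.toGroup.of]
  have step (y : ZMod 3) : permOfGen .a (0, y) = (0, y + 1) := by simp [permOfGen, permA]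
  have step_inv (y : ZMod 3) : (permOfGen .a)⁻¹ (0, y) = (0, y - 1) := by
    rw [Equiv.Perm.inv_eq_iff_eq, step, sub_add_cancel]
  induction n using Int.induction_on generalizing y with
  | zero => simp
  | succ k ih => rw [zpow_add_one, Equiv.Perm.mul_apply, step, ih]; push_cast; ring_nf
  | pred k ih => rw [zpow_sub_one, Equiv.Perm.mul_apply, step_inv, ih]; push_cast; ring_nf

theorem b_zpow_smul (i : ℤ) (p : ZMod 3 × ZMod 3) : b ^ i • p = (p.1 + i, p.2) := by
  rw [smul_eq_cosetPerm_apply, map_zpow, cosetPerm, b, PresentedGroup.toGroup.of]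
  simp [permOfGen, permB, Prod.ext_iff]

theorem b_zpow_mul_a_zpow_smul_zero (i n : ℤ) :
    (b ^ i * a ^ n) • (0 : ZMod 3 × ZMod 3) = ((i : ZMod 3), (n : ZMod 3)) := by
  rw [mul_smul, Prod.zero_eq_mk, a_zpow_smul_mk_zero, b_zpow_smul, zero_add, zero_add]

instance : IsPretransitive A (ZMod 3 × ZMod 3) := by
  rw [isPretransitive_iff_base 0]
  intro p
  refine ⟨b ^ (p.1.val : ℤ) * a ^ (p.2.val : ℤ), ?_⟩
  rw [b_zpow_mul_a_zpow_smul_zero, Int.cast_natCast, Int.cast_natCast, ZMod.natCast_zmod_val,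
    ZMod.natCast_zmod_val]

theorem stabilizer_zero_eq_zpowers_a_pow_three :
    stabilizer A (0 : ZMod 3 × ZMod 3) = zpowers (a ^ 3) := by
  refine le_antisymm (fun g hg => ?_) (zpowers_le.mpr ?_)
  · obtain ⟨i, n, rfl⟩ := exists_zpow_mul_zpow_eq closure_a_b g
    rw [mem_stabilizer_iff, b_zpow_mul_a_zpow_smul_zero, Prod.zero_eq_mk, Prod.mk.injEq,
      ZMod.intCast_zmod_eq_zero_iff_dvd, ZMod.intCast_zmod_eq_zero_iff_dvd] at hg
    obtain ⟨⟨k, rfl⟩, ⟨m, rfl⟩⟩ := hg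
    refine ⟨m, ?_⟩
    simp [zpow_mul, b_pow_three]
  · rw [mem_stabilizer_iff, ← zpow_natCast, Prod.zero_eq_mk, a_zpow_smul_mk_zero]
    decide

/-- In `A = ⟨a, b | b³ = 1, a⁻¹ba = b⁻¹⟩`, the cyclic subgroup `⟨a³⟩` has index `9`. -/
theorem index_zpowers_a_cubed : (Subgroup.zpowers (a ^ 3)).index = 9 := by
  rw [← stabilizer_zero_eq_zpowers_a_pow_three, index_stabilizer_of_transitive]
  simp
end
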